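/- For the coefficients c_n = −1/(n 2^n) + (−1)^{n+1} 2^n B_{n+1}(5/4)/(n(n+1)), one has c_n = −a_{n+1}/n where a_{2n+1} = (8 − E_{2n})/2^{2n+2} and a_{2n} = (1 − 2^{1−2n}) B_{2n}/(4n); in particular c_1 = −1/48, c_2 = −9/32, c_3 = 7/5760, c_4 = −3/256. -/

import Mathlib

open scoped Nat

/-- The Euler numbers `E n`, defined by the generating function
`2 e^t / (e^{2t} + 1) = ∑ E n t^n / n!`. -/
noncomputable def eulerNumber (n : ℕ) : ℚ :=
  (n ! : ℚ) * (PowerSeries.coeff n)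
    (2 * PowerSeries.exp ℚ * (PowerSeries.rescale 2 (PowerSeries.exp ℚ) + 1)⁻¹)

/-- The coefficients `a_n`: `a_{2m+1} = (8 - E_{2m})/2^{2m+2}` and
`a_{2m} = (1 - 2^{1-2m}) B_{2m}/(4m)`. -/
noncomputable def aCoeff (n : ℕ) : ℚ :=
  if Even n then (1 - 2 ^ (1 - (n : ℤ))) * bernoulli n / (2 * n)
  else (8 - eulerNumber (n - 1)) / 2 ^ (n + 1)

/-- The coefficients `c_n = -1/(n 2^n) + (-1)^{n+1} 2^n B_{n+1}(5/4)/(n(n+1))`. -/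
noncomputable def cCoeff (n : ℕ) : ℚ :=
  -1 / (n * 2 ^ n) +
    (-1) ^ (n + 1) * 2 ^ n * (Polynomial.bernoulli (n + 1)).eval (5 / 4 : ℚ) / (n * (n + 1))

/-!
With `B(x, t) = t e^{xt} / (e^t - 1)` and `E(t) = 2 e^t / (e^{2t} + 1)` one checks
`B(1/2, 2t) - B(1/4, 4t) = t E(t)`. Comparing coefficients, together with
`B_k(1/2) = (2^{1-k} - 1) B_k` and `B_{k+1}(5/4) = B_{k+1}(1/4) + (k+1) 4^{-k}`, expresses
`4^{n+1} B_{n+1}(5/4)` through `B_{n+1}` and `E_n`. As `E` is even and the Bernoulli numbers of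
odd index `> 1` vanish, only one of the two survives, according to the parity of `n`; these are
the two cases of `a_{n+1}`. The four explicit values are direct evaluations.
-/

open PowerSeries

theorem Polynomial.bernoulli_eval_one_half (k : ℕ) :
    (bernoulli k).eval (1 / 2 : ℚ) = (2 / (2 : ℚ) ^ k - 1) * _root_.bernoulli k := by
  have h := bernoulliFun_eval_half k
  rw [bernoulliFun, ← one_div, show (1 / 2 : ℝ) = algebraMap ℚ ℝ (1 / 2) by norm_num,
    Polynomial.eval_map_algebraMap, Polynomial.aeval_algebraMap_apply,
    Polynomial.coe_aeval_eq_eval, eq_ratCast] at h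
  apply Rat.cast_injective (α := ℝ)
  rw [h]
  push_cast
  ring

lemma PowerSeries.constantCoeff_rescale {R : Type*} [CommSemiring R] (a : R) (f : R⟦X⟧) :
    constantCoeff (rescale a f) = constantCoeff f := by
  rw [← coeff_zero_eq_constantCoeff_apply, coeff_rescale, pow_zero, one_mul,
    coeff_zero_eq_constantCoeff_apply]

lemma constantCoeff_rescale_exp_add_one (a : ℚ) :
    constantCoeff (rescale a (exp ℚ) + 1) = 2 := by
  rw [map_add, constantCoeff_rescale, constantCoeff_exp, map_one, one_add_one_eq_two]

lemma rescale_exp_add_one_ne_zero (a : ℚ) : rescale a (exp ℚ) + 1 ≠ 0 := fun h ↦ by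
  simpa [h] using constantCoeff_rescale_exp_add_one a

lemma rescale_exp_sub_one_ne_zero {a : ℚ} (ha : a ≠ 0) : rescale a (exp ℚ) - 1 ≠ 0 := fun h ↦ by
  simpa [coeff_exp, ha] using congrArg (coeff 1) h

noncomputable def eulerSeries : ℚ⟦X⟧ :=
  2 * exp ℚ * (rescale 2 (exp ℚ) + 1)⁻¹

lemma coeff_eulerSeries (n : ℕ) : coeff n eulerSeries = eulerNumber n / n ! := by
  rw [eulerNumber, mul_div_cancel_left₀ _ (by positivity)]
  rfl

lemma eulerSeries_mul_rescale_exp_add_one :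
    eulerSeries * (rescale 2 (exp ℚ) + 1) = 2 * exp ℚ := by
  have h₀ : constantCoeff (rescale (2 : ℚ) (exp ℚ) + 1) ≠ 0 := by
    rw [constantCoeff_rescale_exp_add_one]
    exact two_ne_zero
  rw [eulerSeries, mul_assoc, PowerSeries.inv_mul_cancel _ h₀, mul_one]

lemma rescale_neg_one_eulerSeries : rescale (-1) eulerSeries = eulerSeries := by
  -- `E(-t) (e^{-2t} + 1) = 2 e^{-t}`, multiplied by `e^{2t}`, is the defining equation of `E(t)`.
  have h := congrArg (rescale (-1 : ℚ)) eulerSeries_mul_rescale_exp_add_one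
  simp only [map_mul, map_add, map_one, map_ofNat, rescale_rescale] at h
  norm_num at h
  have h₁ : rescale (-2) (exp ℚ) * rescale 2 (exp ℚ) = 1 := by
    rw [exp_mul_exp_eq_exp_add, neg_add_cancel]
    simp
  have h₂ : rescale (-1) (exp ℚ) * rescale 2 (exp ℚ) = exp ℚ := by
    rw [exp_mul_exp_eq_exp_add]
    norm_num
  refine mul_right_cancel₀ (rescale_exp_add_one_ne_zero 2) ?_
  linear_combination rescale 2 (exp ℚ) * h - rescale (-1) eulerSeries * h₁ + 2 * h₂ -
    eulerSeries_mul_rescale_exp_add_one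

lemma eulerNumber_eq_zero_of_odd {n : ℕ} (hn : Odd n) : eulerNumber n = 0 := by
  have h := congrArg (coeff n) rescale_neg_one_eulerSeries
  rw [coeff_rescale, hn.neg_one_pow, coeff_eulerSeries] at h
  have : eulerNumber n / n ! = 0 := by linarith
  simpa [Nat.factorial_ne_zero] using this

noncomputable def bernoulliSeries (t : ℚ) : ℚ⟦X⟧ :=
  mk fun n ↦ (Polynomial.bernoulli n).eval t / n !

lemma bernoulliSeries_mul_exp_sub_one (t : ℚ) :
    bernoulliSeries t * (exp ℚ - 1) = X * rescale t (exp ℚ) := by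
  convert Polynomial.bernoulli_generating_function t using 2
  ext n
  simp [bernoulliSeries, div_eq_inv_mul]

lemma rescale_bernoulliSeries_mul_rescale_exp_sub_one (a t : ℚ) :
    rescale a (bernoulliSeries t) * (rescale a (exp ℚ) - 1) =
      C a * X * rescale (t * a) (exp ℚ) := by
  simpa [rescale_X, rescale_rescale] using
    congrArg (rescale a) (bernoulliSeries_mul_exp_sub_one t)

lemma rescale_bernoulliSeries_half_sub_quarter :
    rescale 2 (bernoulliSeries (1 / 2)) - rescale 4 (bernoulliSeries (1 / 4)) =
      X * eulerSeries := by
  refine mul_right_cancel₀ (rescale_exp_sub_one_ne_zero (a := 4) (by norm_num)) ?_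
  have h₂ := rescale_bernoulliSeries_mul_rescale_exp_sub_one 2 (1 / 2)
  have h₄ := rescale_bernoulliSeries_mul_rescale_exp_sub_one 4 (1 / 4)
  have hsq := exp_mul_exp_eq_exp_add (2 : ℚ) 2
  norm_num [rescale_one, map_ofNat] at h₂ h₄ hsq
  rw [← hsq] at h₄ ⊢
  linear_combination (rescale 2 (exp ℚ) + 1) * h₂ - h₄ -
    X * (rescale 2 (exp ℚ) - 1) * eulerSeries_mul_rescale_exp_add_one

lemma bernoulli_eval_one_quarter (k : ℕ) :
    4 ^ (k + 1) * (Polynomial.bernoulli (k + 1)).eval (1 / 4 : ℚ) =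
      (2 - 2 ^ (k + 1)) * bernoulli (k + 1) - (k + 1) * eulerNumber k := by
  have h := congrArg (coeff (k + 1)) rescale_bernoulliSeries_half_sub_quarter
  simp only [map_sub, coeff_rescale, bernoulliSeries, coeff_mk, coeff_succ_X_mul,
    coeff_eulerSeries, Polynomial.bernoulli_eval_one_half, Nat.factorial_succ] at h
  push_cast at h
  field_simp at h
  linear_combination -h

lemma bernoulli_eval_five_quarters (k : ℕ) :
    4 ^ (k + 1) * (Polynomial.bernoulli (k + 1)).eval (5 / 4 : ℚ) =
      (2 - 2 ^ (k + 1)) * bernoulli (k + 1) - (k + 1) * eulerNumber k + 4 * (k + 1) := by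
  rw [show (5 / 4 : ℚ) = 1 + 1 / 4 by norm_num, Polynomial.bernoulli_eval_one_add, mul_add,
    bernoulli_eval_one_quarter, Nat.add_sub_cancel, one_div, inv_pow]
  push_cast
  field_simp
  ring

lemma cCoeff_eq_neg_aCoeff_succ_div {n : ℕ} (hn : 1 ≤ n) : cCoeff n = -aCoeff (n + 1) / n := by
  have hn₀ : (n : ℚ) ≠ 0 := Nat.cast_ne_zero.mpr (by omega)
  have hB : (Polynomial.bernoulli (n + 1)).eval (5 / 4 : ℚ) =
      ((2 - 2 ^ (n + 1)) * bernoulli (n + 1) - (n + 1) * eulerNumber n + 4 * (n + 1)) /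
        4 ^ (n + 1) := by
    rw [← bernoulli_eval_five_quarters, mul_div_cancel_left₀ _ (by positivity)]
  have h4 : (4 : ℚ) ^ (n + 1) = 2 ^ (n + 1) * 2 ^ (n + 1) := by
    rw [← mul_pow]
    norm_num
  rw [cCoeff, aCoeff, hB, h4]
  rcases n.even_or_odd with hn_even | hn_odd
  · have hodd : Odd (n + 1) := hn_even.add_one
    rw [bernoulli_eq_zero_of_odd hodd (by omega), if_neg (Nat.not_even_iff_odd.mpr hodd),
      Nat.add_sub_cancel, hodd.neg_one_pow]
    field_simp
    ring
  · have heven : Even (n + 1) := hn_odd.add_one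
    rw [eulerNumber_eq_zero_of_odd hn_odd, if_pos heven, heven.neg_one_pow, Nat.cast_succ,
      show (1 : ℤ) - (n + 1) = -n by ring, zpow_neg, zpow_natCast]
    push_cast
    field_simp
    ring

lemma bernoulli_four : bernoulli 4 = -1 / 30 := by
  rw [bernoulli_eq_bernoulli'_of_ne_one (by norm_num), bernoulli'_four]

theorem cCoeff_eq_neg_aCoeff_div :
    (∀ n : ℕ, 1 ≤ n → cCoeff n = -aCoeff (n + 1) / n) ∧
    cCoeff 1 = -1 / 48 ∧ cCoeff 2 = -9 / 32 ∧ cCoeff 3 = 7 / 5760 ∧ cCoeff 4 = -3 / 256 := by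
  have hB₃ : bernoulli 3 = 0 := bernoulli_eq_zero_of_odd (by decide) (by norm_num)
  have hB₅ : bernoulli 5 = 0 := bernoulli_eq_zero_of_odd (by decide) (by norm_num)
  refine ⟨fun n hn ↦ cCoeff_eq_neg_aCoeff_succ_div hn, ?_, ?_, ?_, ?_⟩ <;>
    norm_num [cCoeff, Polynomial.bernoulli_def, Finset.sum_range_succ, Nat.choose, bernoulli_two,
      hB₃, bernoulli_four, hB₅]
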